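/- arXiv:1309.7857 — 2 statements merged into one kernel-verified Lean document; each statement's English description precedes it below -/
import Mathlib

section
/- Injectivity criterion: let M ∈ ℝ^{k×k} be symmetric positive semidefinite, B ∈ ℝ^{k×n} injective, C ∈ ℝ^{k×l}, A ∈ ℝ^{n×p}. Then the block matrix 𝓜 with rows [−Cᵀ, 0; 0, −Aᵀ; M, −B; Bᵀ, 0] (acting on (u, y) ∈ ℝ^k × ℝ^n) is injective if and only if Null(M) ∩ Null(Bᵀ) ∩ Null(Cᵀ) = {0}. -/
/-!
The operator is linear, so injectivity means a trivial kernel. A kernel element `(u, y)` has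
`Mu = By` and `Bᵀu = 0`, hence `uᵀMu = (Bᵀu)ᵀy = 0`, and positive semidefiniteness upgrades this to
`Mu = 0`. Then `By = 0` forces `y = 0`, and `u` lies in `Null(M) ∩ Null(Bᵀ) ∩ Null(Cᵀ)`.
-/

open Matrix

def kktMap {R k n l p : Type*} [CommRing R] [Fintype k] [Fintype n]
    (M : Matrix k k R) (B : Matrix k n R) (C : Matrix k l R) (A : Matrix n p R) :
    (k → R) × (n → R) →ₗ[R] (l → R) × (p → R) × (k → R) × (n → R) where
  toFun uy := (-(Cᵀ *ᵥ uy.1), -(Aᵀ *ᵥ uy.2), M *ᵥ uy.1 - B *ᵥ uy.2, Bᵀ *ᵥ uy.1)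
  map_add' _ _ := by simp only [Prod.fst_add, Prod.snd_add, mulVec_add, Prod.mk_add_mk]; abel_nf
  map_smul' _ _ := by simp [mulVec_smul, smul_sub]

theorem kktMap_eq_zero_iff {R k n l p : Type*} [CommRing R] [Fintype k] [Fintype n]
    {M : Matrix k k R} {B : Matrix k n R} {C : Matrix k l R} {A : Matrix n p R}
    {u : k → R} {y : n → R} :
    kktMap M B C A (u, y) = 0 ↔
      Cᵀ *ᵥ u = 0 ∧ Aᵀ *ᵥ y = 0 ∧ M *ᵥ u = B *ᵥ y ∧ Bᵀ *ᵥ u = 0 := by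
  simp [kktMap, sub_eq_zero]

open scoped ComplexOrder in
theorem Matrix.PosSemidef.mulVec_eq_zero_of_mulVec_eq_mulVec {𝕜 k n : Type*} [RCLike 𝕜]
    [Fintype k] [Fintype n] {M : Matrix k k 𝕜} (hM : M.PosSemidef) {B : Matrix k n 𝕜}
    {u : k → 𝕜} {y : n → 𝕜} (hMB : M *ᵥ u = B *ᵥ y) (hBu : Bᴴ *ᵥ u = 0) : M *ᵥ u = 0 := by
  rw [← hM.dotProduct_mulVec_zero_iff, hMB, dotProduct_mulVec, ← conjTranspose_conjTranspose B,
    ← star_mulVec, hBu, star_zero, zero_dotProduct]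

theorem kkt_matrix_injectivity {k n l p : ℕ}
    (M : Matrix (Fin k) (Fin k) ℝ) (hM : M.PosSemidef)
    (B : Matrix (Fin k) (Fin n) ℝ) (hB : Function.Injective B.mulVec)
    (C : Matrix (Fin k) (Fin l) ℝ) (A : Matrix (Fin n) (Fin p) ℝ) :
    Function.Injective
        (fun uy : (Fin k → ℝ) × (Fin n → ℝ) =>
          (-(Cᵀ.mulVec uy.1), -(Aᵀ.mulVec uy.2),
            M.mulVec uy.1 - B.mulVec uy.2, Bᵀ.mulVec uy.1)) ↔
      ∀ u : Fin k → ℝ, M.mulVec u = 0 → Bᵀ.mulVec u = 0 → Cᵀ.mulVec u = 0 → u = 0 := by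
  change Function.Injective (kktMap M B C A) ↔ _
  rw [injective_iff_map_eq_zero]
  constructor
  · intro hker u hMu hBu hCu
    simpa using hker (u, 0) (kktMap_eq_zero_iff.mpr ⟨hCu, mulVec_zero _, by simp [hMu], hBu⟩)
  · rintro hnull ⟨u, y⟩ hzero
    obtain ⟨hCu, -, hMB, hBu⟩ := kktMap_eq_zero_iff.mp hzero
    have hMu : M *ᵥ u = 0 :=
      hM.mulVec_eq_zero_of_mulVec_eq_mulVec hMB (by rwa [conjTranspose_eq_transpose_of_trivial])
    have hy : y = 0 := hB (by rw [← hMB, hMu, mulVec_zero])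
    rw [hnull u hMu hBu hCu, hy, Prod.mk_zero_zero]
end

section
/- Invertibility of the reduced KKT matrix: let M ∈ ℝ^{k×k} be symmetric positive semidefinite, B ∈ ℝ^{k×n} injective, C ∈ ℝ^{k×l}, A ∈ ℝ^{n×p}, and let S, Q ∈ ℝ^{l×l} and R, W ∈ ℝ^{p×p} be diagonal matrices with strictly positive diagonal entries. Then the block matrix [[M + C S Q⁻¹ Cᵀ, −B], [Bᵀ, A R W⁻¹ Aᵀ]] is invertible if and only if Null(M) ∩ Null(Bᵀ) ∩ Null(Cᵀ) = {0}. -/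
/-!
For the block matrix `K` and `x = (u, v)`, the off-diagonal blocks `-B` and `Bᵀ` cancel in the
quadratic form, so `xᵀ K x = uᵀ P u + vᵀ H v` with `P = M + C S Q⁻¹ Cᵀ` and `H = A R W⁻¹ Aᵀ`
both positive semidefinite. Hence `K x = 0` forces `P u = 0` and `H v = 0`, and the block
equations then give `Bᵀ u = 0` and `B v = 0`. Since `S Q⁻¹` is positive definite, `P u = 0`
splits into `M u = 0` and `Cᵀ u = 0`; injectivity of `B` disposes of `v`.
-/

open Matrix

namespace Matrix

variable {m n ι : Type*} [Fintype m] [Fintype n] [Fintype ι]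

lemma posDef_diagonal_mul_inv_diagonal [DecidableEq n] {s q : n → ℝ}
    (hs : ∀ i, 0 < s i) (hq : ∀ i, 0 < q i) : (diagonal s * (diagonal q)⁻¹).PosDef := by
  have hinv : (diagonal q)⁻¹ = diagonal q⁻¹ :=
    inv_eq_right_inv <| by simp [fun i => (hq i).ne']
  rw [hinv, diagonal_mul_diagonal, posDef_diagonal_iff]
  exact fun i => mul_pos (hs i) (inv_pos.mpr (hq i))

lemma PosSemidef.add_mulVec_eq_zero_iff {M N : Matrix n n ℝ} (hM : M.PosSemidef)
    (hN : N.PosSemidef) (x : n → ℝ) :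
    (M + N) *ᵥ x = 0 ↔ M *ᵥ x = 0 ∧ N *ᵥ x = 0 := by
  refine ⟨fun h => ?_, fun ⟨hMx, hNx⟩ => by rw [add_mulVec, hMx, hNx, add_zero]⟩
  have hsum : x ⬝ᵥ M *ᵥ x + x ⬝ᵥ N *ᵥ x = 0 := by
    rw [← dotProduct_add, ← add_mulVec, h, dotProduct_zero]
  have hMx := hM.dotProduct_mulVec_nonneg x
  have hNx := hN.dotProduct_mulVec_nonneg x
  simp only [star_trivial] at hMx hNx
  simp only [← hM.dotProduct_mulVec_zero_iff, ← hN.dotProduct_mulVec_zero_iff, star_trivial]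
  constructor <;> linarith

lemma PosDef.mul_mul_transpose_mulVec_eq_zero_iff {D : Matrix ι ι ℝ} (hD : D.PosDef)
    (C : Matrix n ι ℝ) (x : n → ℝ) : (C * D * Cᵀ) *ᵥ x = 0 ↔ Cᵀ *ᵥ x = 0 := by
  refine ⟨fun h => ?_, fun h => by rw [← mulVec_mulVec, h, mulVec_zero]⟩
  have hquad : x ⬝ᵥ (C * D * Cᵀ) *ᵥ x = (Cᵀ *ᵥ x) ⬝ᵥ D *ᵥ (Cᵀ *ᵥ x) := by
    rw [← mulVec_mulVec, ← mulVec_mulVec, dotProduct_mulVec, ← mulVec_transpose]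
  by_contra hCx
  have := hD.dotProduct_mulVec_pos hCx
  rw [star_trivial, ← hquad, h, dotProduct_zero] at this
  exact this.false

lemma PosSemidef.mul_mul_transpose_same {D : Matrix ι ι ℝ} (hD : D.PosSemidef)
    (C : Matrix n ι ℝ) : (C * D * Cᵀ).PosSemidef := by
  simpa only [conjTranspose_eq_transpose_of_trivial] using hD.mul_mul_conjTranspose_same C

lemma sumElim_dotProduct_fromBlocks_neg_transpose_mulVec {R : Type*} [CommRing R]
    (P : Matrix m m R) (B : Matrix m n R) (H : Matrix n n R) (u : m → R) (v : n → R) :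
    Sum.elim u v ⬝ᵥ fromBlocks P (-B) Bᵀ H *ᵥ Sum.elim u v = u ⬝ᵥ P *ᵥ u + v ⬝ᵥ H *ᵥ v := by
  have hcross : u ⬝ᵥ (-B) *ᵥ v = -(v ⬝ᵥ Bᵀ *ᵥ u) := by
    rw [neg_mulVec, dotProduct_neg, dotProduct_mulVec, ← mulVec_transpose, dotProduct_comm]
  simp [fromBlocks_mulVec, dotProduct_add, hcross]

lemma fromBlocks_neg_transpose_mulVec_eq_zero {P : Matrix m m ℝ} {H : Matrix n n ℝ}
    (hP : P.PosSemidef) (hH : H.PosSemidef) (B : Matrix m n ℝ) {u : m → ℝ} {v : n → ℝ}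
    (h : fromBlocks P (-B) Bᵀ H *ᵥ Sum.elim u v = 0) :
    P *ᵥ u = 0 ∧ Bᵀ *ᵥ u = 0 ∧ B *ᵥ v = 0 := by
  have henergy : u ⬝ᵥ P *ᵥ u + v ⬝ᵥ H *ᵥ v = 0 := by
    rw [← sumElim_dotProduct_fromBlocks_neg_transpose_mulVec, h, dotProduct_zero]
  have hPu := hP.dotProduct_mulVec_nonneg u
  have hHv := hH.dotProduct_mulVec_nonneg v
  simp only [star_trivial] at hPu hHv
  have hPu0 : P *ᵥ u = 0 := by
    rw [← hP.dotProduct_mulVec_zero_iff, star_trivial]; linarith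
  have hHv0 : H *ᵥ v = 0 := by
    rw [← hH.dotProduct_mulVec_zero_iff, star_trivial]; linarith
  rw [fromBlocks_mulVec, Sum.elim_comp_inl, Sum.elim_comp_inr, hPu0, hHv0, neg_mulVec,
    zero_add, add_zero, ← Sum.elim_zero_zero, Sum.elim_eq_iff] at h
  exact ⟨hPu0, h.2, neg_eq_zero.mp h.1⟩

lemma isUnit_fromBlocks_neg_transpose_iff [DecidableEq m] [DecidableEq n]
    {P : Matrix m m ℝ} {H : Matrix n n ℝ} (hP : P.PosSemidef) (hH : H.PosSemidef)
    {B : Matrix m n ℝ} (hB : Function.Injective B.mulVec) :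
    IsUnit (fromBlocks P (-B) Bᵀ H) ↔ ∀ u, P *ᵥ u = 0 → Bᵀ *ᵥ u = 0 → u = 0 := by
  rw [← mulVec_injective_iff_isUnit]
  change Function.Injective (mulVecLin _) ↔ _
  simp only [injective_iff_map_eq_zero, mulVecLin_apply]
  constructor
  · intro hK u hPu hBu
    have := hK (Sum.elim u 0) (by simp [fromBlocks_mulVec, hPu, hBu])
    simpa using congrArg (· ∘ Sum.inl) this
  · intro hker x hx
    rw [← Sum.elim_comp_inl_inr x] at hx ⊢
    obtain ⟨hPu, hBu, hBv⟩ := fromBlocks_neg_transpose_mulVec_eq_zero hP hH B hx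
    have hu := hker _ hPu hBu
    have hv := hB (hBv.trans (mulVec_zero B).symm)
    rw [hu, hv, Sum.elim_zero_zero]

end Matrix

theorem reduced_kkt_invertibility {k n l p : ℕ}
    (M : Matrix (Fin k) (Fin k) ℝ) (hM : M.PosSemidef)
    (B : Matrix (Fin k) (Fin n) ℝ) (hB : Function.Injective B.mulVec)
    (C : Matrix (Fin k) (Fin l) ℝ) (A : Matrix (Fin n) (Fin p) ℝ)
    (s q : Fin l → ℝ) (r w : Fin p → ℝ)
    (hs : ∀ i, 0 < s i) (hq : ∀ i, 0 < q i) (hr : ∀ i, 0 < r i) (hw : ∀ i, 0 < w i) :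
    IsUnit
        (Matrix.fromBlocks
          (M + C * Matrix.diagonal s * (Matrix.diagonal q)⁻¹ * Cᵀ) (-B)
          Bᵀ (A * Matrix.diagonal r * (Matrix.diagonal w)⁻¹ * Aᵀ)) ↔
      ∀ u : Fin k → ℝ, M.mulVec u = 0 → Bᵀ.mulVec u = 0 → Cᵀ.mulVec u = 0 → u = 0 := by
  have hSQ := posDef_diagonal_mul_inv_diagonal hs hq
  have hRW := posDef_diagonal_mul_inv_diagonal hr hw
  rw [Matrix.mul_assoc C, Matrix.mul_assoc A,
    isUnit_fromBlocks_neg_transpose_iff (hM.add (hSQ.posSemidef.mul_mul_transpose_same C))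
      (hRW.posSemidef.mul_mul_transpose_same A) hB]
  refine forall_congr' fun u => ?_
  rw [hM.add_mulVec_eq_zero_iff (hSQ.posSemidef.mul_mul_transpose_same C),
    hSQ.mul_mul_transpose_mulVec_eq_zero_iff]
  tauto
end
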